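/- Dyadic cube decomposition of a very well shaped set, cardinality bound: let m ≥ 1, let Ω ⊆ 𝕋_m be very well shaped with constant C, and fix γ ∈ 𝕋_m. For a positive integer k let C(k) be the set of cubes of the form ∏_{j=1}^m [γ_j + u_j/k, γ_j + (u_j+1)/k] (taken modulo 1, u ∈ ℤ^m) that are contained in Ω; let B_1 = C(2) and, for i ≥ 2, let B_i be the set of cubes in C(2^i) not contained in any cube of C(2^{i−1}). Then #B_i ≤ c (1 + μ(Ω)^{(m−1)/m} 2^{i(m−1)}) for all i ≥ 1, where c depends only on m and C. -/

import Mathlib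

open MeasureTheory

noncomputable section

abbrev Torus (m : ℕ) : Type := Fin m → AddCircle (1 : ℝ)

noncomputable def tmeas {m : ℕ} (Ω : Set (Torus m)) : ℝ := (volume Ω).toReal

noncomputable def torusDist {m : ℕ} (u w : Torus m) : ℝ :=
  Real.sqrt (∑ i, dist (u i) (w i) ^ 2)

noncomputable def torusDistSet {m : ℕ} (u : Torus m) (Ω : Set (Torus m)) : ℝ :=
  ⨅ w : Ω, torusDist u (w : Torus m)

def outerShell {m : ℕ} (Ω : Set (Torus m)) (ε : ℝ) : Set (Torus m) :=
  {u | u ∉ Ω ∧ torusDistSet u Ω < ε}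

def innerShell {m : ℕ} (Ω : Set (Torus m)) (ε : ℝ) : Set (Torus m) :=
  {u | u ∈ Ω ∧ torusDistSet u Ωᶜ < ε}

def IsWellShaped {m : ℕ} (Ω : Set (Torus m)) (C : ℝ) : Prop :=
  ∀ ε : ℝ, 0 < ε →
    tmeas (outerShell Ω ε) ≤ C * ε ∧ tmeas (innerShell Ω ε) ≤ C * ε

def IsVeryWellShaped {m : ℕ} (Ω : Set (Torus m)) (C : ℝ) : Prop :=
  ∀ ε : ℝ, 0 < ε →
    tmeas (outerShell Ω ε) ≤ C * (tmeas Ω ^ (1 - 1 / (m : ℝ)) * ε + ε ^ m) ∧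
    tmeas (innerShell Ω ε) ≤ C * (tmeas Ω ^ (1 - 1 / (m : ℝ)) * ε + ε ^ m)

noncomputable def discrepancy {ι : Type*} {n : ℕ} (s : Set ι) (ξ : ι → Fin n → ℝ) : ℝ :=
  if s.ncard = 0 then 1
  else
    ⨆ B : {B : (Fin n → ℝ) × (Fin n → ℝ) // ∀ j, 0 ≤ B.1 j ∧ B.1 j ≤ B.2 j ∧ B.2 j ≤ 1},
      |((s ∩ {k | ∀ j, B.val.1 j ≤ ξ k j ∧ ξ k j < B.val.2 j}).ncard : ℝ) / (s.ncard : ℝ)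
        - ∏ j, (B.val.2 j - B.val.1 j)|

noncomputable def torusPt (p : ℕ) {m : ℕ} (x : Fin m → Fin p) : Torus m :=
  fun i => ((((x i : ℕ) : ℝ) / (p : ℝ) : ℝ) : AddCircle (1 : ℝ))

noncomputable def fracPt {p m n : ℕ} (G : Fin n → MvPolynomial (Fin m) (ZMod p))
    (x : Fin m → ℤ) : Fin n → ℝ :=
  fun j => ((MvPolynomial.eval (fun i => ((x i : ℤ) : ZMod p)) (G j)).val : ℝ) / (p : ℝ)

def Degree2Independent {p m n : ℕ} (G : Fin n → MvPolynomial (Fin m) (ZMod p)) : Prop :=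
  ∀ a : Fin n → ZMod p, a ≠ 0 → 2 ≤ (∑ j, a j • G j).totalDegree

def torusIcc (a b : ℝ) : Set (AddCircle (1 : ℝ)) :=
  (fun r : ℝ => (r : AddCircle (1 : ℝ))) '' Set.Icc a b

def gridCube {m : ℕ} (γ : Fin m → ℝ) (k : ℕ) (u : Fin m → ℤ) : Set (Torus m) :=
  {t | ∀ i, t i ∈ torusIcc (γ i + (u i : ℝ) / k) (γ i + ((u i : ℝ) + 1) / k)}

def torusCube {m : ℕ} (γ : Fin m → ℝ) (s : ℝ) : Set (Torus m) :=
  {t | ∀ i, t i ∈ torusIcc (γ i) (γ i + s)}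

def cubesIn {m : ℕ} (Ω : Set (Torus m)) (γ : Fin m → ℝ) (k : ℕ) : Set (Set (Torus m)) :=
  {Γ | (∃ u : Fin m → ℤ, Γ = gridCube γ k u) ∧ Γ ⊆ Ω}

def dyadicB {m : ℕ} (Ω : Set (Torus m)) (γ : Fin m → ℝ) (i : ℕ) : Set (Set (Torus m)) :=
  if i = 1 then cubesIn Ω γ 2
  else {Γ | Γ ∈ cubesIn Ω γ (2 ^ i) ∧ ∀ Γ' ∈ cubesIn Ω γ (2 ^ (i - 1)), ¬ Γ ⊆ Γ'}

def polySolutions (p : ℕ) {m n : ℕ} (F : Fin n → MvPolynomial (Fin m) ℤ) :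
    Set (Fin m → Fin p) :=
  {x | ∀ j, ((MvPolynomial.eval (fun i => ((x i : ℕ) : ℤ)) (F j) : ℤ) : ZMod p) = 0}

noncomputable def Tcount (p : ℕ) {m n : ℕ} (F : Fin n → MvPolynomial (Fin m) ℤ)
    (S : Set (Torus m)) : ℕ :=
  (polySolutions p F ∩ {x | torusPt p x ∈ S}).ncard

end

/-! A cube of `B_i`, `i ≥ 2`, lies in `Ω` while its parent cube of side `2 / 2ⁱ` does not, so it
lies within the parent's diameter `2 √m / 2ⁱ` of `Ωᶜ`, i.e. in the inner shell `Ω_ε^-` with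
`ε = 2 (√m + 1) / 2ⁱ`. Distinct grid cubes overlap in null sets and have volume `2^{-im}`, so
`#B_i ≤ 2^{im} μ(Ω_ε^-) ≤ C 2^{im} (μ(Ω)^{1-1/m} ε + εᵐ)`, which is the bound with
`c = (|C| + 1) (2 (√m + 1))ᵐ`. Finally `#B_1 ≤ 2ᵐ μ(Ω) ≤ 2ᵐ` by the same volume count. -/

lemma AddCircle.coe_add_intCast (x : ℝ) (n : ℤ) : ((x + n : ℝ) : AddCircle (1 : ℝ)) = x := by
  rw [AddCircle.coe_add, add_eq_left]
  exact (AddCircle.coe_eq_zero_iff (p := (1 : ℝ))).mpr ⟨n, by simp⟩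

lemma AddCircle.exists_intCast_of_coe_eq_coe {s t : ℝ} (h : (s : AddCircle (1 : ℝ)) = t) :
    ∃ n : ℤ, s - t = n := by
  obtain ⟨n, hn⟩ := (AddCircle.coe_eq_zero_iff (p := (1 : ℝ)) (x := s - t)).mp
    (by rw [AddCircle.coe_sub, h, sub_self])
  exact ⟨n, by simpa using hn.symm⟩

instance AddCircle.nullSingletonClass_volume :
    NullSingletonClass (volume : Measure (AddCircle (1 : ℝ))) :=
  ⟨fun x => by simpa using AddCircle.volume_closedBall (T := 1) (x := x) 0⟩

lemma torusIcc_add_intCast (a b : ℝ) (n : ℤ) : torusIcc (a + n) (b + n) = torusIcc a b := by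
  rw [torusIcc, ← Set.image_add_const_Icc, Set.image_image]
  simp only [AddCircle.coe_add_intCast, torusIcc]

lemma torusIcc_mono {a b a' b' : ℝ} (ha : a' ≤ a) (hb : b ≤ b') :
    torusIcc a b ⊆ torusIcc a' b' :=
  Set.image_mono (Set.Icc_subset_Icc ha hb)

lemma dist_le_of_mem_torusIcc {a b : ℝ} {x y : AddCircle (1 : ℝ)} (hx : x ∈ torusIcc a b)
    (hy : y ∈ torusIcc a b) : dist x y ≤ b - a := by
  obtain ⟨s, hs, rfl⟩ := hx
  obtain ⟨t, ht, rfl⟩ := hy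
  calc dist (s : AddCircle (1 : ℝ)) t = ‖((s - t : ℝ) : AddCircle (1 : ℝ))‖ := by
        rw [dist_eq_norm, AddCircle.coe_sub]
    _ ≤ |s - t| := QuotientAddGroup.norm_mk_le_norm
    _ ≤ b - a := abs_sub_le_iff.mpr ⟨by linarith [hs.2, ht.1], by linarith [hs.1, ht.2]⟩

lemma torusIcc_eq_closedBall (a b : ℝ) :
    torusIcc a b = Metric.closedBall (((a + b) / 2 : ℝ) : AddCircle (1 : ℝ)) ((b - a) / 2) := by
  ext x
  obtain ⟨y, rfl⟩ := QuotientAddGroup.mk_surjective x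
  rw [← Set.mem_preimage (s := Metric.closedBall _ _),
    AddCircle.coe_real_preimage_closedBall_eq_iUnion]
  simp only [Set.mem_iUnion, Metric.mem_closedBall, Real.dist_eq, abs_le, zsmul_eq_mul, mul_one]
  constructor
  · rintro ⟨r, hr, hry⟩
    obtain ⟨n, hn⟩ := AddCircle.exists_intCast_of_coe_eq_coe hry.symm
    exact ⟨n, by linarith [hr.1], by linarith [hr.2]⟩
  · rintro ⟨n, h₁, h₂⟩
    exact ⟨y - n, ⟨by linarith, by linarith⟩, by simp [← AddCircle.coe_add_intCast (y - n) n]⟩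

lemma volume_torusIcc {a b : ℝ} (hab : b - a ≤ 1) :
    volume (torusIcc a b) = ENNReal.ofReal (b - a) := by
  rw [torusIcc_eq_closedBall, AddCircle.volume_closedBall, min_eq_right (by linarith)]
  ring_nf

lemma measurableSet_torusIcc (a b : ℝ) : MeasurableSet (torusIcc a b) :=
  (isCompact_Icc.image (AddCircle.continuous_mk' 1)).isClosed.measurableSet

lemma torusIcc_inter_subset_endpoints {k : ℕ} (hk : 0 < k) (g : ℝ) {p q : ℤ}
    (hpq : ¬ (k : ℤ) ∣ p - q) :
    torusIcc (g + p / k) (g + (p + 1) / k) ∩ torusIcc (g + q / k) (g + (q + 1) / k) ⊆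
      {((g + p / k : ℝ) : AddCircle (1 : ℝ)), ((g + (p + 1) / k : ℝ) : AddCircle (1 : ℝ))} := by
  rintro x ⟨⟨s, hs, rfl⟩, ⟨t, ht, hts⟩⟩
  obtain ⟨n, hn⟩ := AddCircle.exists_intCast_of_coe_eq_coe hts.symm
  by_contra hx
  simp only [Set.mem_insert_iff, Set.mem_singleton_iff, not_or] at hx
  have hk' : (0 : ℝ) < k := by exact_mod_cast hk
  -- in the coordinates `k * (· - g)`, `s` is interior to `[p, p + 1]` and `t ∈ [q, q + 1]`, so the
  -- integer `k * n = k * (s - t)` lies strictly between `p - q - 1` and `p - q + 1`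
  have hs₁ : (p : ℝ) < (s - g) * k :=
    (div_lt_iff₀ hk').mp (by linarith [lt_of_le_of_ne hs.1 fun h => hx.1 (by rw [h])])
  have hs₂ : (s - g) * k < p + 1 :=
    (lt_div_iff₀ hk').mp (by linarith [lt_of_le_of_ne hs.2 fun h => hx.2 (by rw [h])])
  have ht₁ : (q : ℝ) ≤ (t - g) * k := (div_le_iff₀ hk').mp (by linarith [ht.1])
  have ht₂ : (t - g) * k ≤ q + 1 := (le_div_iff₀ hk').mp (by linarith [ht.2])
  have hkn : ((k * n : ℤ) : ℝ) = (s - g) * k - (t - g) * k := by push_cast; rw [← hn]; ring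
  have h₁ : p - q - 1 < k * n := by
    have : ((p - q - 1 : ℤ) : ℝ) < ((k * n : ℤ) : ℝ) := by rw [hkn]; push_cast; linarith
    exact_mod_cast this
  have h₂ : k * n < p - q + 1 := by
    have : ((k * n : ℤ) : ℝ) < ((p - q + 1 : ℤ) : ℝ) := by rw [hkn]; push_cast; linarith
    exact_mod_cast this
  exact hpq ⟨n, by omega⟩

section GridCube

variable {m : ℕ} (γ : Fin m → ℝ) {k : ℕ}

lemma gridCube_eq_pi (k : ℕ) (u : Fin m → ℤ) :
    gridCube γ k u = Set.univ.pi fun i => torusIcc (γ i + u i / k) (γ i + (u i + 1) / k) := by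
  ext t
  simp [gridCube, Set.mem_pi]

lemma measurableSet_gridCube (k : ℕ) (u : Fin m → ℤ) : MeasurableSet (gridCube γ k u) := by
  rw [gridCube_eq_pi]
  exact MeasurableSet.univ_pi fun i => measurableSet_torusIcc _ _

lemma volume_gridCube (hk : 0 < k) (u : Fin m → ℤ) :
    volume (gridCube γ k u) = ENNReal.ofReal ((k : ℝ)⁻¹ ^ m) := by
  have hk' : (1 : ℝ) ≤ k := by exact_mod_cast hk
  have hside : ∀ i, (γ i + (u i + 1) / k) - (γ i + u i / k) = (k : ℝ)⁻¹ := fun i => by ring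
  rw [gridCube_eq_pi, volume_pi_pi]
  simp_rw [volume_torusIcc ((hside _).trans_le (inv_le_one_of_one_le₀ hk')), hside]
  rw [Finset.prod_const, Finset.card_univ, Fintype.card_fin,
    ENNReal.ofReal_pow (inv_nonneg.mpr (Nat.cast_nonneg k))]

lemma gridCube_eq_of_dvd_sub (hk : 0 < k) {u v : Fin m → ℤ} (h : ∀ i, (k : ℤ) ∣ u i - v i) :
    gridCube γ k u = gridCube γ k v := by
  rw [gridCube_eq_pi, gridCube_eq_pi]
  congr 1
  funext i
  obtain ⟨n, hn⟩ := h i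
  have hk' : (k : ℝ) ≠ 0 := by positivity
  have hu : (u i : ℝ) = v i + k * n := by rw [← sub_eq_iff_eq_add']; exact_mod_cast hn
  have e₁ : γ i + u i / k = γ i + v i / k + n := by rw [hu]; field_simp; ring
  have e₂ : γ i + (u i + 1) / k = γ i + (v i + 1) / k + n := by rw [hu]; field_simp; ring
  rw [e₁, e₂, torusIcc_add_intCast]

lemma finite_range_gridCube (hk : 0 < k) : (Set.range (gridCube γ k)).Finite := by
  have : NeZero k := ⟨hk.ne'⟩
  refine (Set.finite_range fun w : Fin m → ZMod k => gridCube γ k fun i => (w i).cast).subset ?_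
  rintro _ ⟨u, rfl⟩
  refine ⟨fun i => u i, gridCube_eq_of_dvd_sub γ hk fun i => ?_⟩
  rw [← ZMod.intCast_eq_intCast_iff_dvd_sub, ZMod.intCast_cast, ZMod.cast_id]

lemma aedisjoint_gridCube (hk : 0 < k) {u v : Fin m → ℤ} (h : gridCube γ k u ≠ gridCube γ k v) :
    AEDisjoint volume (gridCube γ k u) (gridCube γ k v) := by
  obtain ⟨i, hi⟩ : ∃ i, ¬ (k : ℤ) ∣ u i - v i := by
    by_contra! hdvd
    exact h (gridCube_eq_of_dvd_sub γ hk hdvd)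
  rw [AEDisjoint, gridCube_eq_pi, gridCube_eq_pi, ← Set.pi_inter_distrib, volume_pi_pi]
  exact Finset.prod_eq_zero (Finset.mem_univ i)
    (measure_mono_null (torusIcc_inter_subset_endpoints hk (γ i) hi)
      ((Set.toFinite _).measure_zero _))

lemma ncard_le_of_subset_range_gridCube (hk : 0 < k) {S : Set (Set (Torus m))}
    (hS : S ⊆ Set.range (gridCube γ k)) {A : Set (Torus m)} (hA : ∀ Γ ∈ S, Γ ⊆ A) :
    (S.ncard : ℝ) ≤ (k : ℝ) ^ m * tmeas A := by
  have hfin : S.Finite := (finite_range_gridCube γ hk).subset hS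
  have hvol : ∀ Γ ∈ S, volume Γ = ENNReal.ofReal ((k : ℝ)⁻¹ ^ m) := by
    rintro _ hΓ
    obtain ⟨u, rfl⟩ := hS hΓ
    exact volume_gridCube γ hk u
  have hdisj :
      (hfin.toFinset : Set (Set (Torus m))).Pairwise (Function.onFun (AEDisjoint volume) id) := by
    intro Γ hΓ Γ' hΓ' hne
    obtain ⟨u, rfl⟩ := hS (hfin.mem_toFinset.mp hΓ)
    obtain ⟨v, rfl⟩ := hS (hfin.mem_toFinset.mp hΓ')
    exact aedisjoint_gridCube γ hk hne
  have hmeas : ∀ Γ ∈ hfin.toFinset, NullMeasurableSet (id Γ) volume := by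
    intro Γ hΓ
    obtain ⟨u, rfl⟩ := hS (hfin.mem_toFinset.mp hΓ)
    exact (measurableSet_gridCube γ k u).nullMeasurableSet
  have hcount : (S.ncard : ENNReal) * ENNReal.ofReal ((k : ℝ)⁻¹ ^ m) ≤ volume A :=
    calc (S.ncard : ENNReal) * ENNReal.ofReal ((k : ℝ)⁻¹ ^ m)
        = ∑ Γ ∈ hfin.toFinset, volume Γ := by
          rw [Finset.sum_congr rfl fun Γ hΓ => hvol Γ (hfin.mem_toFinset.mp hΓ), Finset.sum_const,
            nsmul_eq_mul, Set.ncard_eq_toFinset_card S hfin]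
      _ = volume (⋃ Γ ∈ hfin.toFinset, Γ) := (measure_biUnion_finset₀ hdisj hmeas).symm
      _ ≤ volume A := measure_mono (Set.iUnion₂_subset fun Γ hΓ => hA Γ (hfin.mem_toFinset.mp hΓ))
  have hreal := ENNReal.toReal_mono (measure_ne_top _ _) hcount
  rw [ENNReal.toReal_mul, ENNReal.toReal_natCast, ENNReal.toReal_ofReal (by positivity)] at hreal
  calc (S.ncard : ℝ) = (k : ℝ) ^ m * (S.ncard * (k : ℝ)⁻¹ ^ m) := by
        rw [inv_pow]; field_simp
    _ ≤ (k : ℝ) ^ m * tmeas A := by gcongr; exact hreal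

lemma gridCube_subset_gridCube_half (hk : 0 < k) (u : Fin m → ℤ) :
    gridCube γ (2 * k) u ⊆ gridCube γ k fun i => u i / 2 := by
  have hk' : (0 : ℝ) < k := by exact_mod_cast hk
  intro t ht i
  have h₁ : 2 * ((u i / 2 : ℤ) : ℝ) ≤ u i := by exact_mod_cast (by omega : 2 * (u i / 2) ≤ u i)
  have h₂ : (u i : ℝ) + 1 ≤ 2 * (((u i / 2 : ℤ) : ℝ) + 1) := by
    exact_mod_cast (by omega : u i + 1 ≤ 2 * (u i / 2 + 1))
  refine torusIcc_mono ?_ ?_ (by simpa using ht i)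
  · rw [add_le_add_iff_left, div_le_div_iff₀ hk' (by positivity)]
    nlinarith
  · rw [add_le_add_iff_left, div_le_div_iff₀ (by positivity) hk']
    nlinarith

lemma torusDist_le_of_mem_gridCube {x y : Torus m} {u : Fin m → ℤ} (hx : x ∈ gridCube γ k u)
    (hy : y ∈ gridCube γ k u) : torusDist x y ≤ √m / k := by
  have hcoord : ∀ i, dist (x i) (y i) ≤ (k : ℝ)⁻¹ := fun i =>
    (dist_le_of_mem_torusIcc (hx i) (hy i)).trans_eq (by ring)
  calc torusDist x y ≤ √(∑ _i : Fin m, (k : ℝ)⁻¹ ^ 2) :=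
        Real.sqrt_le_sqrt (Finset.sum_le_sum fun i _ => pow_le_pow_left₀ dist_nonneg (hcoord i) 2)
    _ = √m / k := by
        rw [Finset.sum_const, Finset.card_univ, Fintype.card_fin, nsmul_eq_mul,
          Real.sqrt_mul' _ (sq_nonneg _), Real.sqrt_sq (inv_nonneg.mpr (Nat.cast_nonneg k)),
          div_eq_mul_inv]

end GridCube

lemma tmeas_le_one {m : ℕ} (A : Set (Torus m)) : tmeas A ≤ 1 := by
  have huniv : volume (Set.univ : Set (Torus m)) = 1 := by
    rw [← Set.pi_univ, volume_pi_pi]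
    simp
  exact (ENNReal.toReal_mono (measure_ne_top _ _) (measure_mono (Set.subset_univ A))).trans_eq
    (by rw [huniv, ENNReal.toReal_one])

lemma torusDistSet_le_torusDist {m : ℕ} (u : Torus m) {w : Torus m} {s : Set (Torus m)}
    (hw : w ∈ s) : torusDistSet u s ≤ torusDist u w :=
  ciInf_le ⟨0, by rintro _ ⟨w', rfl⟩; exact Real.sqrt_nonneg _⟩ (⟨w, hw⟩ : s)

lemma subset_innerShell_of_not_subset {m : ℕ} {Ω Γ P : Set (Torus m)} {d ε : ℝ} (hΓΩ : Γ ⊆ Ω)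
    (hΓP : Γ ⊆ P) (hPΩ : ¬ P ⊆ Ω) (hP : ∀ x ∈ P, ∀ y ∈ P, torusDist x y ≤ d) (hdε : d < ε) :
    Γ ⊆ innerShell Ω ε := by
  obtain ⟨w, hwP, hwΩ⟩ := Set.not_subset.mp hPΩ
  exact fun t ht => ⟨hΓΩ ht,
    (torusDistSet_le_torusDist t hwΩ).trans_lt ((hP t (hΓP ht) w hwP).trans_lt hdε)⟩

section Dyadic

variable {m : ℕ} {Ω : Set (Torus m)} {γ : Fin m → ℝ}

lemma cubesIn_subset_range_gridCube (k : ℕ) : cubesIn Ω γ k ⊆ Set.range (gridCube γ k) :=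
  fun _ ⟨⟨u, hu⟩, _⟩ => ⟨u, hu.symm⟩

lemma dyadicB_one : dyadicB Ω γ 1 = cubesIn Ω γ 2 := if_pos rfl

lemma dyadicB_subset_cubesIn {i : ℕ} (hi : 1 ≤ i) : dyadicB Ω γ i ⊆ cubesIn Ω γ (2 ^ i) := by
  obtain rfl | hi := hi.eq_or_lt
  · rw [dyadicB_one, pow_one]
  · rw [dyadicB, if_neg hi.ne']
    exact fun _ hΓ => hΓ.1

lemma dyadicB_subset_innerShell {i : ℕ} (hi : 2 ≤ i) {Γ : Set (Torus m)}
    (hΓ : Γ ∈ dyadicB Ω γ i) : Γ ⊆ innerShell Ω (2 * (√m + 1) / 2 ^ i) := by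
  obtain ⟨j, rfl⟩ : ∃ j, i = j + 1 := ⟨i - 1, by omega⟩
  rw [dyadicB, if_neg (by omega), Nat.add_sub_cancel] at hΓ
  obtain ⟨⟨⟨u, rfl⟩, hΩ⟩, hmax⟩ := hΓ
  have hparent : gridCube γ (2 ^ (j + 1)) u ⊆ gridCube γ (2 ^ j) fun i => u i / 2 := by
    rw [pow_succ']
    exact gridCube_subset_gridCube_half γ (by positivity) u
  refine subset_innerShell_of_not_subset hΩ hparent (fun h => hmax _ ⟨⟨_, rfl⟩, h⟩ hparent)
    (fun x hx y hy => torusDist_le_of_mem_gridCube γ hx hy) ?_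
  rw [pow_succ', mul_div_mul_left _ _ two_ne_zero]
  push_cast
  gcongr
  linarith

lemma ncard_dyadicB_le {i : ℕ} (hi : 2 ≤ i) :
    ((dyadicB Ω γ i).ncard : ℝ) ≤ 2 ^ (i * m) * tmeas (innerShell Ω (2 * (√m + 1) / 2 ^ i)) := by
  have := ncard_le_of_subset_range_gridCube γ (k := 2 ^ i) (S := dyadicB Ω γ i) (by positivity)
    ((dyadicB_subset_cubesIn (by omega)).trans (cubesIn_subset_range_gridCube _))
    fun _ hΓ => dyadicB_subset_innerShell hi hΓ
  rwa [Nat.cast_pow, Nat.cast_ofNat, ← pow_mul] at this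

lemma ncard_dyadicB_one_le : ((dyadicB Ω γ 1).ncard : ℝ) ≤ 2 ^ m :=
  calc ((dyadicB Ω γ 1).ncard : ℝ) ≤ 2 ^ m * tmeas Ω := by
        simpa [dyadicB_one] using ncard_le_of_subset_range_gridCube γ (k := 2) two_pos
          (cubesIn_subset_range_gridCube 2) fun _ hΓ => hΓ.2
    _ ≤ 2 ^ m := mul_le_of_le_one_right (by positivity) (tmeas_le_one Ω)

end Dyadic

lemma two_pow_mul_shell_bound_eq {m : ℕ} (hm : 1 ≤ m) (C x K : ℝ) (i : ℕ) :
    2 ^ (i * m) * (C * (x * (K / 2 ^ i) + (K / 2 ^ i) ^ m))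
      = C * K * (x * 2 ^ (i * (m - 1))) + C * K ^ m := by
  obtain ⟨n, rfl⟩ : ∃ n, m = n + 1 := ⟨m - 1, by omega⟩
  rw [Nat.add_sub_cancel, pow_mul, pow_mul]
  have ht : (2 : ℝ) ^ i ≠ 0 := by positivity
  generalize (2 : ℝ) ^ i = t at ht ⊢
  rw [div_pow]
  field_simp
  ring

lemma mul_add_mul_pow_le {m : ℕ} (hm : m ≠ 0) (C : ℝ) {K X : ℝ} (hK : 1 ≤ K) (hX : 0 ≤ X) :
    C * K * X + C * K ^ m ≤ (|C| + 1) * K ^ m * (1 + X) := by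
  have hC : C ≤ |C| + 1 := by linarith [le_abs_self C]
  have hCK : C * K ≤ (|C| + 1) * K ^ m :=
    calc C * K ≤ (|C| + 1) * K := by gcongr
      _ ≤ (|C| + 1) * K ^ m := by gcongr; exact le_self_pow₀ hK hm
  nlinarith [mul_le_mul_of_nonneg_right hCK hX,
    mul_le_mul_of_nonneg_right hC (by positivity : 0 ≤ K ^ m)]

/-- Dyadic cube decomposition of a very well shaped set:
`#B_i ≤ c (1 + μ(Ω)^{(m−1)/m} 2^{i(m−1)})` with `c = c(m,C)`. -/
theorem dyadicB_card_very_well_shaped (m : ℕ) (hm : 1 ≤ m) (C : ℝ) :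
    ∃ c : ℝ, 0 < c ∧
      ∀ Ω : Set (Torus m), IsVeryWellShaped Ω C → ∀ γ : Fin m → ℝ, ∀ i : ℕ, 1 ≤ i →
        ((dyadicB Ω γ i).ncard : ℝ)
          ≤ c * (1 + tmeas Ω ^ (((m : ℝ) - 1) / (m : ℝ)) * 2 ^ (i * (m - 1))) := by
  set K : ℝ := 2 * (√m + 1)
  have hK : 2 ≤ K := by linarith [Real.sqrt_nonneg (m : ℝ)]
  refine ⟨(|C| + 1) * K ^ m, by positivity, fun Ω hΩ γ i hi => ?_⟩
  set Y := tmeas Ω ^ (((m : ℝ) - 1) / (m : ℝ))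
  have hX : 0 ≤ Y * 2 ^ (i * (m - 1)) := by unfold Y tmeas; positivity
  obtain rfl | hi := hi.eq_or_lt
  · calc ((dyadicB Ω γ 1).ncard : ℝ) ≤ 2 ^ m := ncard_dyadicB_one_le
      _ ≤ 1 * K ^ m * 1 := by rw [one_mul, mul_one]; gcongr
      _ ≤ _ := by gcongr <;> linarith [abs_nonneg C]
  · have hshell := (hΩ _ (by positivity : (0 : ℝ) < K / 2 ^ i)).2
    rw [one_sub_div (by positivity)] at hshell
    calc ((dyadicB Ω γ i).ncard : ℝ) ≤ 2 ^ (i * m) * tmeas (innerShell Ω (K / 2 ^ i)) :=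
          ncard_dyadicB_le hi
      _ ≤ 2 ^ (i * m) * (C * (Y * (K / 2 ^ i) + (K / 2 ^ i) ^ m)) := by gcongr
      _ = C * K * (Y * 2 ^ (i * (m - 1))) + C * K ^ m := two_pow_mul_shell_bound_eq hm _ _ _ i
      _ ≤ _ := mul_add_mul_pow_le (by omega) C (by linarith) hX
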